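/- Let p_1, p_2 be monic polynomials with distinct roots {λ_j}_{j=1}^{d_1}, {μ_k}_{k=1}^{d_2}, Lagrange polynomials δ_{1,j}, δ_{2,k}, and K_i = p_i^{-1}(M_i). For f : M_1 × M_2 → ℂ^{d_1×d_2} define (Lf)(z_1,z_2) = Σ_{j,k} δ_{1,j}(z_1) δ_{2,k}(z_2) f_{jk}(p_1(z_1), p_2(z_2)). Then L(f ⊛ g) = (Lf)(Lg) pointwise on K_1 × K_2, where ⊛ is the two-variable polyproduct. -/

import Mathlib

open Polynomial Finset

/-- `σ_{jl} = 1/(p'(λ_l)(λ_j - λ_l))` where `p = ∏ (X - λ_i)`. -/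
noncomputable def sigma {d : ℕ} (lam : Fin d → ℂ) (j l : Fin d) : ℂ :=
  1 / ((Polynomial.derivative (∏ i, (X - C (lam i)))).eval (lam l) * (lam j - lam l))

/-- The two-variable polyproduct of `ℂ^{d₁×d₂}`-valued functions, componentwise. -/
noncomputable def polyprod2 {d1 d2 : ℕ} (lam : Fin d1 → ℂ) (mu : Fin d2 → ℂ)
    (f g : ℂ → ℂ → Fin d1 → Fin d2 → ℂ) (w1 w2 : ℂ) (j : Fin d1) (k : Fin d2) : ℂ :=
  f w1 w2 j k * g w1 w2 j k -
    w1 * ∑ l ∈ Finset.univ.erase j,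
      sigma lam j l * (f w1 w2 j k - f w1 w2 l k) * (g w1 w2 j k - g w1 w2 l k) -
    w2 * ∑ m ∈ Finset.univ.erase k,
      sigma mu k m * (f w1 w2 j k - f w1 w2 j m) * (g w1 w2 j k - g w1 w2 j m) +
    w1 * w2 * ∑ l ∈ Finset.univ.erase j, ∑ m ∈ Finset.univ.erase k,
      sigma lam j l * sigma mu k m *
        ((f w1 w2 j k - f w1 w2 j m) - (f w1 w2 l k - f w1 w2 l m)) *
        ((g w1 w2 j k - g w1 w2 j m) - (g w1 w2 l k - g w1 w2 l m))

/-- Lagrange basis polynomial `δ_j` evaluated at `z`. -/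
noncomputable def lagrange {d : ℕ} (lam : Fin d → ℂ) (j : Fin d) (z : ℂ) : ℂ :=
  ∏ l ∈ Finset.univ.erase j, (z - lam l) / (lam j - lam l)

/-- The two-variable multicentric representation
`(Lf)(z₁,z₂) = Σ_{j,k} δ_{1,j}(z₁) δ_{2,k}(z₂) f_{jk}(p₁(z₁), p₂(z₂))`. -/
noncomputable def mcL2 {d1 d2 : ℕ} (lam : Fin d1 → ℂ) (mu : Fin d2 → ℂ)
    (f : ℂ → ℂ → Fin d1 → Fin d2 → ℂ) (z1 z2 : ℂ) : ℂ :=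
  ∑ j, ∑ k, lagrange lam j z1 * lagrange mu k z2 *
    f ((∏ i, (X - C (lam i))).eval z1) ((∏ i, (X - C (mu i))).eval z2) j k

/- ### Auxiliary lemmas -/

lemma sigma_self {d : ℕ} (lam : Fin d → ℂ) (j : Fin d) : sigma lam j j = 0 := by
  simp [sigma]

lemma deriv_eval {d : ℕ} (lam : Fin d → ℂ) (l : Fin d) :
    (Polynomial.derivative (∏ i, (X - C (lam i)))).eval (lam l)
      = ∏ m ∈ Finset.univ.erase l, (lam l - lam m) := by
  have h := Lagrange.eval_nodal_derivative_eval_node_eq (s := univ) (v := lam) (mem_univ l)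
  rw [Lagrange.eval_nodal] at h
  exact h

lemma lagrange_eq {d : ℕ} (lam : Fin d → ℂ) (j : Fin d) (z : ℂ) :
    lagrange lam j z
      = (∏ m ∈ univ.erase j, (z - lam m)) / (∏ m ∈ univ.erase j, (lam j - lam m)) := by
  rw [lagrange, Finset.prod_div_distrib]

lemma sum_lagrange {d : ℕ} [Nonempty (Fin d)] (lam : Fin d → ℂ)
    (hlam : Function.Injective lam) (z : ℂ) : ∑ j, lagrange lam j z = 1 := by
  have hb : ∀ j, lagrange lam j z = (Lagrange.basis univ lam j).eval z := by
    intro j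
    simp only [lagrange, Lagrange.basis, eval_prod, Lagrange.basisDivisor, eval_mul, eval_sub,
      eval_C, eval_X]
    exact prod_congr rfl fun l _ => div_eq_inv_mul _ _
  simp_rw [hb, ← Polynomial.eval_finset_sum]
  rw [Lagrange.sum_basis hlam.injOn univ_nonempty, eval_one]

lemma D_ne_zero {d : ℕ} {lam : Fin d → ℂ} (hlam : Function.Injective lam) (j : Fin d) :
    (∏ m ∈ univ.erase j, (lam j - lam m)) ≠ 0 := by
  rw [Finset.prod_ne_zero_iff]
  intro m hm
  rw [sub_ne_zero]
  exact fun h => (mem_erase.mp hm).1 (hlam h.symm)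

lemma key {d : ℕ} (lam : Fin d → ℂ) (hlam : Function.Injective lam) (z : ℂ)
    {j l : Fin d} (hjl : j ≠ l) :
    lagrange lam j z * lagrange lam l z =
      (∏ i, (z - lam i)) *
        (sigma lam j l * lagrange lam j z + sigma lam l j * lagrange lam l z) := by
  set N : Fin d → ℂ := fun j => ∏ m ∈ univ.erase j, (z - lam m) with hN
  set D : Fin d → ℂ := fun j => ∏ m ∈ univ.erase j, (lam j - lam m) with hD
  have hDj := D_ne_zero hlam j
  have hDl := D_ne_zero hlam l
  have hjl' : lam j - lam l ≠ 0 := sub_ne_zero.mpr (fun h => hjl (hlam h))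
  have hlj' : lam l - lam j ≠ 0 := sub_ne_zero.mpr (fun h => hjl (hlam h.symm))
  have hwj : (∏ i, (z - lam i)) = (z - lam j) * N j :=
    (Finset.mul_prod_erase _ _ (mem_univ j)).symm
  have hwl : (∏ i, (z - lam i)) = (z - lam l) * N l :=
    (Finset.mul_prod_erase _ _ (mem_univ l)).symm
  rw [lagrange_eq, lagrange_eq, sigma, sigma, deriv_eval, deriv_eval]
  show N j / D j * (N l / D l) =
    (∏ i, (z - lam i)) * (1 / (D l * (lam j - lam l)) * (N j / D j)
      + 1 / (D j * (lam l - lam j)) * (N l / D l))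
  have main : N j * N l * (lam j - lam l)
      = (∏ i, (z - lam i)) * N j - (∏ i, (z - lam i)) * N l := by
    nth_rewrite 1 [hwl]
    rw [hwj]
    ring
  have hDj2 : D j ≠ 0 := hDj
  have hDl2 : D l ≠ 0 := hDl
  field_simp
  linear_combination (lam l - lam j) * main

/-- One-variable product rule for the multicentric representation, full-sum form. -/
lemma lemA {d : ℕ} (lam : Fin d → ℂ) (hlam : Function.Injective lam) (z : ℂ) (x y : Fin d → ℂ)
    (w : ℂ) (hw : w = ∏ i, (z - lam i)) :
    (∑ j, lagrange lam j z * x j) * (∑ j, lagrange lam j z * y j) =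
    ∑ j, lagrange lam j z * (x j * y j -
      w * ∑ l, sigma lam j l * (x j - x l) * (y j - y l)) := by
  subst hw
  rcases isEmpty_or_nonempty (Fin d) with h | h
  · simp
  set a : Fin d → ℂ := fun j => lagrange lam j z with ha
  set w : ℂ := ∏ i, (z - lam i) with hw
  have hsum : ∑ j, a j = 1 := sum_lagrange lam hlam z
  have h1 : (∑ j, a j * x j) * (∑ j, a j * y j)
      = ∑ j, ∑ l, (a j * a l * (x j * y j) + a j * a l * (x j * (y l - y j))) := by
    rw [Finset.sum_mul_sum]
    exact sum_congr rfl fun j _ => sum_congr rfl fun l _ => by ring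
  have h2 : ∀ j : Fin d, ∑ l, a j * a l * (x j * y j) = a j * (x j * y j) := by
    intro j
    rw [show (∑ l, a j * a l * (x j * y j)) = (a j * (x j * y j)) * ∑ l, a l from by
      rw [Finset.mul_sum]; exact sum_congr rfl fun l _ => by ring]
    rw [hsum, mul_one]
  have h3 : ∀ j l : Fin d, a j * a l * (x j * (y l - y j))
      = w * (sigma lam j l * a j) * (x j * (y l - y j))
        + w * (sigma lam l j * a l) * (x j * (y l - y j)) := by
    intro j l
    by_cases hjl : j = l
    · subst hjl; simp [sub_self]
    · rw [show a j * a l = w * (sigma lam j l * a j + sigma lam l j * a l) from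
        key lam hlam z hjl]
      ring
  have main : ∑ j, ∑ l, a j * a l * (x j * (y l - y j))
      = ∑ j, a j * (-(w * ∑ l, sigma lam j l * (x j - x l) * (y j - y l))) := by
    calc ∑ j, ∑ l, a j * a l * (x j * (y l - y j))
        = (∑ j, ∑ l, w * (sigma lam j l * a j) * (x j * (y l - y j)))
            + ∑ j, ∑ l, w * (sigma lam l j * a l) * (x j * (y l - y j)) := by
          rw [← Finset.sum_add_distrib]
          refine sum_congr rfl fun j _ => ?_
          rw [← Finset.sum_add_distrib]
          exact sum_congr rfl fun l _ => h3 j l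
      _ = (∑ j, ∑ l, w * (sigma lam j l * a j) * (x j * (y l - y j)))
            + ∑ j, ∑ l, w * (sigma lam j l * a j) * (x l * (y j - y l)) := by
          congr 1
          exact Finset.sum_comm
      _ = ∑ j, ∑ l, (w * (sigma lam j l * a j) * (x j * (y l - y j))
            + w * (sigma lam j l * a j) * (x l * (y j - y l))) := by
          rw [← Finset.sum_add_distrib]
          exact sum_congr rfl fun j _ => (Finset.sum_add_distrib).symm
      _ = ∑ j, a j * (-(w * ∑ l, sigma lam j l * (x j - x l) * (y j - y l))) := by
          refine sum_congr rfl fun j _ => ?_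
          rw [show a j * (-(w * ∑ l, sigma lam j l * (x j - x l) * (y j - y l)))
              = (-(a j * w)) * ∑ l, sigma lam j l * (x j - x l) * (y j - y l) from by ring,
            Finset.mul_sum]
          exact sum_congr rfl fun l _ => by ring
  rw [h1]
  rw [Finset.sum_congr rfl fun j _ => Finset.sum_add_distrib, Finset.sum_add_distrib,
    Finset.sum_congr rfl fun j _ => h2 j, main, ← Finset.sum_add_distrib]
  exact sum_congr rfl fun j _ => by ring

/-- auxiliary: the "diagonal part" of the polyproduct. -/
noncomputable def Af {d1 d2 : ℕ} (mu : Fin d2 → ℂ) (f g : ℂ → ℂ → Fin d1 → Fin d2 → ℂ)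
    (w1 w2 : ℂ) (j : Fin d1) (k : Fin d2) : ℂ :=
  f w1 w2 j k * g w1 w2 j k -
    w2 * ∑ m, sigma mu k m * (f w1 w2 j k - f w1 w2 j m) * (g w1 w2 j k - g w1 w2 j m)

/-- auxiliary: the "difference part" of the polyproduct. -/
noncomputable def Bf {d1 d2 : ℕ} (mu : Fin d2 → ℂ) (f g : ℂ → ℂ → Fin d1 → Fin d2 → ℂ)
    (w1 w2 : ℂ) (j l : Fin d1) (k : Fin d2) : ℂ :=
  (f w1 w2 j k - f w1 w2 l k) * (g w1 w2 j k - g w1 w2 l k) -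
    w2 * ∑ m, sigma mu k m *
      ((f w1 w2 j k - f w1 w2 l k) - (f w1 w2 j m - f w1 w2 l m)) *
      ((g w1 w2 j k - g w1 w2 l k) - (g w1 w2 j m - g w1 w2 l m))

lemma lemPoly {d1 d2 : ℕ} (lam : Fin d1 → ℂ) (mu : Fin d2 → ℂ)
    (f g : ℂ → ℂ → Fin d1 → Fin d2 → ℂ) (w1 w2 : ℂ) (j : Fin d1) (k : Fin d2) :
    polyprod2 lam mu f g w1 w2 j k
      = Af mu f g w1 w2 j k - w1 * ∑ l, sigma lam j l * Bf mu f g w1 w2 j l k := by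
  rw [polyprod2, Af]
  rw [Finset.sum_erase _ (by simp [sigma_self]),
      Finset.sum_erase _ (by simp [sigma_self])]
  have e3 : (∑ l ∈ univ.erase j, ∑ m ∈ univ.erase k,
        sigma lam j l * sigma mu k m *
          ((f w1 w2 j k - f w1 w2 j m) - (f w1 w2 l k - f w1 w2 l m)) *
          ((g w1 w2 j k - g w1 w2 j m) - (g w1 w2 l k - g w1 w2 l m)))
      = ∑ l, ∑ m,
        sigma lam j l * sigma mu k m *
          ((f w1 w2 j k - f w1 w2 j m) - (f w1 w2 l k - f w1 w2 l m)) *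
          ((g w1 w2 j k - g w1 w2 j m) - (g w1 w2 l k - g w1 w2 l m)) := by
    rw [Finset.sum_congr rfl fun l _ => Finset.sum_erase _ (by simp [sigma_self])]
    exact Finset.sum_erase _ (Finset.sum_eq_zero fun m _ => by simp [sigma_self])
  rw [e3]
  have hB : ∀ l, sigma lam j l * Bf mu f g w1 w2 j l k
      = sigma lam j l * ((f w1 w2 j k - f w1 w2 l k) * (g w1 w2 j k - g w1 w2 l k))
        - ∑ m, w2 * (sigma lam j l * sigma mu k m *
            ((f w1 w2 j k - f w1 w2 j m) - (f w1 w2 l k - f w1 w2 l m)) *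
            ((g w1 w2 j k - g w1 w2 j m) - (g w1 w2 l k - g w1 w2 l m))) := by
    intro l
    rw [Bf, mul_sub]
    congr 1
    rw [Finset.mul_sum, Finset.mul_sum]
    exact sum_congr rfl fun m _ => by ring
  rw [Finset.sum_congr rfl fun l _ => hB l, Finset.sum_sub_distrib]
  have hpull : (∑ l, ∑ m, w2 * (sigma lam j l * sigma mu k m *
        ((f w1 w2 j k - f w1 w2 j m) - (f w1 w2 l k - f w1 w2 l m)) *
        ((g w1 w2 j k - g w1 w2 j m) - (g w1 w2 l k - g w1 w2 l m))))
      = w2 * ∑ l, ∑ m, sigma lam j l * sigma mu k m *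
        ((f w1 w2 j k - f w1 w2 j m) - (f w1 w2 l k - f w1 w2 l m)) *
        ((g w1 w2 j k - g w1 w2 j m) - (g w1 w2 l k - g w1 w2 l m)) := by
    rw [Finset.mul_sum]
    exact sum_congr rfl fun l _ => (Finset.mul_sum _ _ _).symm
  rw [hpull]
  have hXX : (∑ l, sigma lam j l * (f w1 w2 j k - f w1 w2 l k) * (g w1 w2 j k - g w1 w2 l k))
      = ∑ l, sigma lam j l * ((f w1 w2 j k - f w1 w2 l k) * (g w1 w2 j k - g w1 w2 l k)) :=
    sum_congr rfl fun l _ => by ring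
  rw [hXX]
  ring

theorem stmt11 {d1 d2 : ℕ} (lam : Fin d1 → ℂ) (mu : Fin d2 → ℂ)
    (hlam : Function.Injective lam) (hmu : Function.Injective mu)
    (M1 M2 : Set ℂ) (f g : ℂ → ℂ → Fin d1 → Fin d2 → ℂ) :
    ∀ z1 z2 : ℂ, (∏ i, (X - C (lam i))).eval z1 ∈ M1 →
      (∏ i, (X - C (mu i))).eval z2 ∈ M2 →
      mcL2 lam mu (polyprod2 lam mu f g) z1 z2 =
        mcL2 lam mu f z1 z2 * mcL2 lam mu g z1 z2 := by
  intro z1 z2 _ _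
  have hev1 : (∏ i, (X - C (lam i))).eval z1 = ∏ i, (z1 - lam i) := by
    simp [eval_prod]
  have hev2 : (∏ i, (X - C (mu i))).eval z2 = ∏ i, (z2 - mu i) := by
    simp [eval_prod]
  rw [mcL2, mcL2, mcL2, hev1, hev2]
  set w1 : ℂ := ∏ i, (z1 - lam i) with hw1
  set w2 : ℂ := ∏ i, (z2 - mu i) with hw2
  -- restructure the sums
  have hstruct : ∀ h : ℂ → ℂ → Fin d1 → Fin d2 → ℂ,
      (∑ j, ∑ k, lagrange lam j z1 * lagrange mu k z2 * h w1 w2 j k)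
        = ∑ j, lagrange lam j z1 * (∑ k, lagrange mu k z2 * h w1 w2 j k) := by
    intro h
    refine sum_congr rfl fun j _ => ?_
    rw [Finset.mul_sum]
    exact sum_congr rfl fun k _ => by ring
  rw [hstruct, hstruct, hstruct]
  rw [lemA lam hlam z1 (fun j => ∑ k, lagrange mu k z2 * f w1 w2 j k)
      (fun j => ∑ k, lagrange mu k z2 * g w1 w2 j k) w1 hw1]
  refine sum_congr rfl fun j _ => ?_
  congr 1
  -- inner equality at fixed j
  have hFG : (∑ k, lagrange mu k z2 * f w1 w2 j k) * (∑ k, lagrange mu k z2 * g w1 w2 j k)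
      = ∑ k, lagrange mu k z2 * Af mu f g w1 w2 j k := by
    rw [lemA mu hmu z2 (fun k => f w1 w2 j k) (fun k => g w1 w2 j k) w2 hw2]
    exact sum_congr rfl fun k _ => by rw [Af]
  have hDiff : ∀ l : Fin d1,
      ((∑ k, lagrange mu k z2 * f w1 w2 j k) - ∑ k, lagrange mu k z2 * f w1 w2 l k)
        * ((∑ k, lagrange mu k z2 * g w1 w2 j k) - ∑ k, lagrange mu k z2 * g w1 w2 l k)
      = ∑ k, lagrange mu k z2 * Bf mu f g w1 w2 j l k := by
    intro l
    have hf' : ((∑ k, lagrange mu k z2 * f w1 w2 j k) - ∑ k, lagrange mu k z2 * f w1 w2 l k)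
        = ∑ k, lagrange mu k z2 * (f w1 w2 j k - f w1 w2 l k) := by
      rw [← Finset.sum_sub_distrib]
      exact sum_congr rfl fun k _ => by ring
    have hg' : ((∑ k, lagrange mu k z2 * g w1 w2 j k) - ∑ k, lagrange mu k z2 * g w1 w2 l k)
        = ∑ k, lagrange mu k z2 * (g w1 w2 j k - g w1 w2 l k) := by
      rw [← Finset.sum_sub_distrib]
      exact sum_congr rfl fun k _ => by ring
    rw [hf', hg', lemA mu hmu z2 (fun k => f w1 w2 j k - f w1 w2 l k)
      (fun k => g w1 w2 j k - g w1 w2 l k) w2 hw2]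
    exact sum_congr rfl fun k _ => by rw [Bf]
  have hswap : (∑ l, sigma lam j l * ∑ k, lagrange mu k z2 * Bf mu f g w1 w2 j l k)
      = ∑ k, lagrange mu k z2 * ∑ l, sigma lam j l * Bf mu f g w1 w2 j l k := by
    calc (∑ l, sigma lam j l * ∑ k, lagrange mu k z2 * Bf mu f g w1 w2 j l k)
        = ∑ l, ∑ k, lagrange mu k z2 * (sigma lam j l * Bf mu f g w1 w2 j l k) := by
          refine sum_congr rfl fun l _ => ?_
          rw [Finset.mul_sum]
          exact sum_congr rfl fun k _ => by ring
      _ = ∑ k, ∑ l, lagrange mu k z2 * (sigma lam j l * Bf mu f g w1 w2 j l k) :=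
          Finset.sum_comm
      _ = ∑ k, lagrange mu k z2 * ∑ l, sigma lam j l * Bf mu f g w1 w2 j l k := by
          refine sum_congr rfl fun k _ => ?_
          rw [Finset.mul_sum]
  calc (∑ k, lagrange mu k z2 * polyprod2 lam mu f g w1 w2 j k)
      = ∑ k, lagrange mu k z2 *
          (Af mu f g w1 w2 j k - w1 * ∑ l, sigma lam j l * Bf mu f g w1 w2 j l k) :=
        sum_congr rfl fun k _ => by rw [lemPoly lam mu f g w1 w2 j k]
    _ = ∑ k, (lagrange mu k z2 * Af mu f g w1 w2 j k
          - w1 * (lagrange mu k z2 * ∑ l, sigma lam j l * Bf mu f g w1 w2 j l k)) :=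
        sum_congr rfl fun k _ => by ring
    _ = (∑ k, lagrange mu k z2 * Af mu f g w1 w2 j k)
          - ∑ k, w1 * (lagrange mu k z2 * ∑ l, sigma lam j l * Bf mu f g w1 w2 j l k) := by
        rw [Finset.sum_sub_distrib]
    _ = (∑ k, lagrange mu k z2 * Af mu f g w1 w2 j k)
          - w1 * ∑ k, lagrange mu k z2 * ∑ l, sigma lam j l * Bf mu f g w1 w2 j l k := by
        rw [Finset.mul_sum]
    _ = (∑ k, lagrange mu k z2 * Af mu f g w1 w2 j k)
          - w1 * ∑ l, sigma lam j l * ∑ k, lagrange mu k z2 * Bf mu f g w1 w2 j l k := by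
        rw [hswap]
    _ = ((∑ k, lagrange mu k z2 * f w1 w2 j k) * ∑ k, lagrange mu k z2 * g w1 w2 j k)
          - w1 * ∑ l, sigma lam j l
              * ((∑ k, lagrange mu k z2 * f w1 w2 j k) - ∑ k, lagrange mu k z2 * f w1 w2 l k)
              * ((∑ k, lagrange mu k z2 * g w1 w2 j k) - ∑ k, lagrange mu k z2 * g w1 w2 l k) := by
        rw [hFG]
        congr 1
        congr 1
        exact sum_congr rfl fun l _ => by rw [mul_assoc, hDiff l]
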